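/- Let y be a Gaussian random variable with mean μ and variance σ², σ > 0, let a ∈ ℝ be the failure threshold, and let δ > 0. Define z⁺ = (a + δ − μ)/σ and z⁻ = (a − δ − μ)/σ, and let Φ and φ denote the standard normal cumulative distribution function and density, respectively. Then the expected improvement E[max(δ² − (y − a)², 0)] equals (δ² − (μ − a)² − σ²)·(Φ(z⁺) − Φ(z⁻)) + σ²·(z⁺·φ(z⁺) − z⁻·φ(z⁻)) + 2(μ − a)·σ·(φ(z⁺) − φ(z⁻)). -/

import Mathlib

/-!
Standardising `y = m + σ z` turns the expectation into `∫ φ(z) (δ² - (m + σ z - a)²) dz` over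
`[z⁻, z⁺]`, the set where the improvement is positive. The integrand is a quadratic in `z` times
`φ`, and `(p + r) Φ - q φ - r z φ` is an antiderivative of `(p + q z + r z²) φ`.
-/

open MeasureTheory ProbabilityTheory Real

/-- The standard normal probability density function. -/
noncomputable def stdNormalPDF (t : ℝ) : ℝ :=
  (1 / Real.sqrt (2 * Real.pi)) * Real.exp (-t ^ 2 / 2)

/-- The standard normal cumulative distribution function. -/
noncomputable def stdNormalCDF (t : ℝ) : ℝ :=
  ∫ u in Set.Iic t, stdNormalPDF u

lemma gaussianPDFReal_zero_one : gaussianPDFReal 0 1 = stdNormalPDF := by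
  ext t
  simp [gaussianPDFReal, stdNormalPDF]

lemma continuous_stdNormalPDF : Continuous stdNormalPDF := by
  unfold stdNormalPDF
  fun_prop

lemma integrable_stdNormalPDF : Integrable stdNormalPDF :=
  gaussianPDFReal_zero_one ▸ integrable_gaussianPDFReal 0 1

lemma hasDerivAt_stdNormalPDF (t : ℝ) : HasDerivAt stdNormalPDF (-t * stdNormalPDF t) t := by
  refine ((((hasDerivAt_pow 2 t).neg.div_const 2).exp).const_mul (1 / √(2 * π))).congr_deriv ?_
  simp only [stdNormalPDF, Pi.neg_apply]
  ring

lemma hasDerivAt_stdNormalCDF (t : ℝ) : HasDerivAt stdNormalCDF (stdNormalPDF t) t := by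
  have hΦ : stdNormalCDF = fun x ↦ (∫ u in (0 : ℝ)..x, stdNormalPDF u) + stdNormalCDF 0 := by
    ext x
    rw [← intervalIntegral.integral_Iic_sub_Iic integrable_stdNormalPDF.integrableOn
      integrable_stdNormalPDF.integrableOn, stdNormalCDF, stdNormalCDF, sub_add_cancel]
  rw [hΦ]
  exact (continuous_stdNormalPDF.integral_hasStrictDerivAt 0 t).hasDerivAt.add_const _

lemma integral_quadratic_mul_stdNormalPDF (p q r u w : ℝ) :
    ∫ z in u..w, (p + q * z + r * z ^ 2) * stdNormalPDF z
      = (p + r) * (stdNormalCDF w - stdNormalCDF u) - q * (stdNormalPDF w - stdNormalPDF u)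
        - r * (w * stdNormalPDF w - u * stdNormalPDF u) := by
  -- `φ' = -z φ` and `(z φ)' = (1 - z²) φ`
  have hF : ∀ z, HasDerivAt
      (fun z ↦ (p + r) * stdNormalCDF z - q * stdNormalPDF z - r * (z * stdNormalPDF z))
      ((p + q * z + r * z ^ 2) * stdNormalPDF z) z := by
    intro z
    have hφ := hasDerivAt_stdNormalPDF z
    refine ((((hasDerivAt_stdNormalCDF z).const_mul (p + r)).sub (hφ.const_mul q)).sub
      (((hasDerivAt_id z).mul hφ).const_mul r)).congr_deriv ?_
    simp only [id]
    ring
  have hcont : Continuous fun z ↦ (p + q * z + r * z ^ 2) * stdNormalPDF z := by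
    have := continuous_stdNormalPDF
    fun_prop
  rw [intervalIntegral.integral_eq_sub_of_hasDerivAt (fun z _ ↦ hF z)
    (hcont.intervalIntegrable u w)]
  ring

lemma gaussianReal_map_const_add_mul (m σ : ℝ) :
    (gaussianReal 0 1).map (fun z ↦ m + σ * z) = gaussianReal m (σ ^ 2).toNNReal := by
  have : (fun z ↦ m + σ * z) = (m + ·) ∘ (σ * ·) := rfl
  rw [this, ← Measure.map_map (measurable_const_add m) (measurable_const_mul σ),
    gaussianReal_map_const_mul, gaussianReal_map_const_add]
  congr 1
  · ring
  · ext
    simp [sq_nonneg]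

lemma integral_gaussianReal_eq_integral_stdNormalPDF_mul {m σ : ℝ} (hσ : σ ≠ 0) (f : ℝ → ℝ) :
    ∫ y, f y ∂gaussianReal m (σ ^ 2).toNNReal = ∫ z, stdNormalPDF z * f (m + σ * z) := by
  have he : MeasurableEmbedding (fun z ↦ m + σ * z) :=
    (measurableEmbedding_addLeft m).comp (measurableEmbedding_mulLeft₀ hσ)
  rw [← gaussianReal_map_const_add_mul, he.integral_map,
    integral_gaussianReal_eq_integral_smul one_ne_zero, gaussianPDFReal_zero_one]
  rfl

lemma integral_mul_max_zero_eq_intervalIntegral {f g : ℝ → ℝ} {u w : ℝ} (huw : u ≤ w)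
    (hpos : ∀ x ∈ Set.Ioc u w, 0 ≤ g x) (hneg : ∀ x ∉ Set.Ioc u w, g x ≤ 0) :
    ∫ x, f x * max (g x) 0 = ∫ x in u..w, f x * g x := by
  rw [intervalIntegral.integral_of_le huw, ← setIntegral_eq_integral_of_forall_compl_eq_zero
    fun x hx ↦ by rw [max_eq_right (hneg x hx), mul_zero]]
  exact setIntegral_congr_fun measurableSet_Ioc fun x hx ↦ by rw [max_eq_left (hpos x hx)]

/-- Closed form for the expected improvement of Ranjan et al.: for a Gaussian random
variable `y ~ N(m, σ²)`, threshold `a` and band half-width `δ > 0`, with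
`z⁺ = (a + δ - m)/σ`, `z⁻ = (a - δ - m)/σ`,
`E[max(δ² - (y - a)², 0)] = (δ² - (m - a)² - σ²)(Φ(z⁺) - Φ(z⁻))
  + σ²(z⁺ φ(z⁺) - z⁻ φ(z⁻)) + 2(m - a) σ (φ(z⁺) - φ(z⁻))`. -/
theorem ranjan_expected_improvement
    (m σ a δ : ℝ) (hσ : 0 < σ) (hδ : 0 < δ) :
    (∫ y, max (δ ^ 2 - (y - a) ^ 2) 0 ∂(gaussianReal m (Real.toNNReal (σ ^ 2))))
      = (δ ^ 2 - (m - a) ^ 2 - σ ^ 2)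
          * (stdNormalCDF ((a + δ - m) / σ) - stdNormalCDF ((a - δ - m) / σ))
        + σ ^ 2 * (((a + δ - m) / σ) * stdNormalPDF ((a + δ - m) / σ)
                - ((a - δ - m) / σ) * stdNormalPDF ((a - δ - m) / σ))
        + 2 * (m - a) * σ
          * (stdNormalPDF ((a + δ - m) / σ) - stdNormalPDF ((a - δ - m) / σ)) := by
  have hinside : ∀ z ∈ Set.Ioc ((a - δ - m) / σ) ((a + δ - m) / σ),
      0 ≤ δ ^ 2 - (m + σ * z - a) ^ 2 := by
    rintro z ⟨hlo, hhi⟩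
    rw [div_lt_iff₀ hσ] at hlo
    rw [le_div_iff₀ hσ] at hhi
    nlinarith
  have houtside : ∀ z ∉ Set.Ioc ((a - δ - m) / σ) ((a + δ - m) / σ),
      δ ^ 2 - (m + σ * z - a) ^ 2 ≤ 0 := by
    intro z hz
    rw [Set.mem_Ioc, not_and_or, not_lt, not_le, div_lt_iff₀ hσ, le_div_iff₀ hσ] at hz
    rcases hz with hlo | hhi <;> nlinarith
  have hquadratic : ∀ z, stdNormalPDF z * (δ ^ 2 - (m + σ * z - a) ^ 2)
      = (δ ^ 2 - (m - a) ^ 2 + -2 * (m - a) * σ * z + -σ ^ 2 * z ^ 2) * stdNormalPDF z := by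
    intro z
    ring
  rw [integral_gaussianReal_eq_integral_stdNormalPDF_mul hσ.ne',
    integral_mul_max_zero_eq_intervalIntegral (by gcongr; linarith) hinside houtside]
  simp_rw [hquadratic, integral_quadratic_mul_stdNormalPDF]
  ring
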